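/- arXiv:2509.12086 — 3 statements merged into one kernel-verified Lean document; each statement's English description precedes it below -/
import Mathlib

section
/- Let B ≥ 1, let v_max > 0, and set Δ = 2·v_max/2^B. For every real number t with −v_max ≤ t < v_max, the CAQ code k = ⌊(t + v_max)/Δ⌋ satisfies k ≥ 2^{B−1} if and only if t ≥ 0. Hence the most significant bit of the B-bit CAQ code of a coordinate equals 1 exactly when the coordinate is nonnegative, i.e., it coincides with the 1-bit sign quantization of RaBitQ. -/
/-- The most significant bit of a `B`-bit CAQ code coincides with RaBitQ's 1-bit
sign quantization: for `t ∈ [−v_max, v_max)` and `k = ⌊(t + v_max)/Δ⌋` with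
`Δ = 2·v_max/2^B`, we have `k ≥ 2^{B−1}` iff `t ≥ 0`. -/
theorem caq_msb_is_sign (B : ℕ) (hB : 1 ≤ B)
    (vmax : ℝ) (hv : 0 < vmax) (Δ : ℝ) (hΔ : Δ = 2 * vmax / 2 ^ B)
    (t : ℝ) (ht1 : -vmax ≤ t) (ht2 : t < vmax)
    (k : ℤ) (hk : k = ⌊(t + vmax) / Δ⌋) :
    (2 : ℤ) ^ (B - 1) ≤ k ↔ 0 ≤ t := by
  have hΔpos : 0 < Δ := by
    rw [hΔ]; positivity
  have hkey : ((2 : ℝ) ^ (B - 1)) * Δ = vmax := by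
    rw [hΔ]
    have : (2 : ℝ) ^ B = 2 ^ (B - 1) * 2 := by
      rw [← pow_succ]
      congr 1
      omega
    rw [this]
    field_simp
  rw [hk, Int.le_floor]
  push_cast
  rw [le_div_iff₀ hΔpos, hkey]
  constructor
  · intro h; linarith
  · intro h; linarith
end

section
/- Let Seg be a finite index set and B a natural number. For each i ∈ Seg, let O_i and Q_i be independent real-valued Gaussian random variables, each with mean 0 and variance σ_i² where σ_i > 0. Then Σ_{i ∈ Seg} E[|O_i·Q_i|] / 2^{B+1} = (1/(2^B·π)) · Σ_{i ∈ Seg} σ_i². That is, SAQ's segment error model ERROR(Seg, B) = Σ_{i ∈ Seg} E[|o_r[i]·q_r[i]|]/2^{B+1} equals (Σ_{i ∈ Seg} σ_i²)/(2^B·π) under the Gaussian model. -/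
open MeasureTheory ProbabilityTheory Real Set NNReal ENNReal

lemma integral_Ioi_mul_exp_neg_mul_sq {b : ℝ} (hb : 0 < b) :
    ∫ x in Ioi (0 : ℝ), x * Real.exp (-b * x ^ 2) = (2 * b)⁻¹ := by
  have hb' : (2 * b) ≠ 0 := by positivity
  have A : ∀ x : ℝ, HasDerivAt (fun x => -(2 * b)⁻¹ * Real.exp (-b * x ^ 2))
      (x * Real.exp (-b * x ^ 2)) x := by
    intro x
    refine (((hasDerivAt_pow 2 x).const_mul (-b)).exp.const_mul (-(2 * b)⁻¹)).congr_deriv ?_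
    field_simp
    ring
  have B : Filter.Tendsto (fun y : ℝ ↦ -(2 * b)⁻¹ * Real.exp (-b * y ^ 2))
      Filter.atTop (nhds (-(2 * b)⁻¹ * 0)) := by
    refine Filter.Tendsto.const_mul _ ?_
    refine Real.tendsto_exp_atBot.comp ?_
    exact (Filter.tendsto_pow_atTop two_ne_zero).const_mul_atTop_of_neg (neg_lt_zero.2 hb)
  have := integral_Ioi_of_hasDerivAt_of_tendsto' (a := 0) (f := fun x => -(2 * b)⁻¹ * Real.exp (-b * x ^ 2))
    (fun x _ => A x) (integrable_mul_exp_neg_mul_sq hb).integrableOn B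
  simpa using this

lemma integral_abs_gaussianReal {v : ℝ≥0} (hv : v ≠ 0) :
    ∫ x, |x| ∂(gaussianReal 0 v) = Real.sqrt (2 * v / Real.pi) := by
  have hv0 : (0 : ℝ) < v := lt_of_le_of_ne v.coe_nonneg (by exact_mod_cast hv.symm)
  rw [gaussianReal_of_var_ne_zero 0 hv]
  have hpdf : gaussianPDF 0 v = fun x => ((Real.toNNReal (gaussianPDFReal 0 v x) : ℝ≥0) : ℝ≥0∞) :=
    rfl
  rw [hpdf, integral_withDensity_eq_integral_smul
    ((measurable_gaussianPDFReal 0 v).real_toNNReal) _]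
  have h1 : ∀ x : ℝ, (Real.toNNReal (gaussianPDFReal 0 v x) : ℝ≥0) • |x|
      = (Real.sqrt (2 * Real.pi * v))⁻¹ * (|x| * Real.exp (-(2 * (v:ℝ))⁻¹ * |x| ^ 2)) := by
    intro x
    have hco : (Real.toNNReal (gaussianPDFReal 0 v x) : ℝ) = gaussianPDFReal 0 v x :=
      Real.coe_toNNReal _ (gaussianPDFReal_nonneg 0 v x)
    rw [NNReal.smul_def, smul_eq_mul, hco, gaussianPDFReal]
    rw [sq_abs]
    have hne : (2 * (v:ℝ)) ≠ 0 := by positivity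
    rw [show -(2 * (v:ℝ))⁻¹ * x ^ 2 = -(x - 0) ^ 2 / (2 * (v:ℝ)) by field_simp; ring]
    ring
  simp_rw [h1]
  rw [integral_const_mul]
  have h2 : (∫ x : ℝ, |x| * Real.exp (-(2 * (v:ℝ))⁻¹ * |x| ^ 2))
      = 2 * ∫ x in Ioi (0:ℝ), x * Real.exp (-(2 * (v:ℝ))⁻¹ * x ^ 2) :=
    integral_comp_abs (f := fun x => x * Real.exp (-(2 * (v:ℝ))⁻¹ * x ^ 2))
  rw [h2, integral_Ioi_mul_exp_neg_mul_sq (by positivity)]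
  have e1 : (2 * (2 * (v:ℝ))⁻¹)⁻¹ = (v:ℝ) := by
    rw [mul_inv, inv_inv]
    field_simp
  rw [e1]
  have e2 : 2 * (v:ℝ) / Real.pi = (2 * (v:ℝ)) ^ 2 / (2 * Real.pi * (v:ℝ)) := by
    have := Real.pi_pos
    field_simp
  rw [e2, Real.sqrt_div (by positivity), Real.sqrt_sq (by positivity), div_eq_mul_inv]
  ring

lemma integral_abs_of_gaussian {Ω : Type*} [MeasureSpace Ω] {X : Ω → ℝ} {σ : ℝ}
    (hσ : 0 < σ) (hm : Measurable X)
    (hlaw : Measure.map X ℙ = gaussianReal 0 (Real.toNNReal (σ ^ 2))) :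
    ∫ ω, |X ω| ∂ℙ = σ * Real.sqrt (2 / Real.pi) := by
  have h0 : Real.toNNReal (σ ^ 2) ≠ 0 := by
    simp [Real.toNNReal_eq_zero, not_le]
    positivity
  have : ∫ ω, |X ω| ∂ℙ = ∫ x, |x| ∂(Measure.map X ℙ) := by
    rw [integral_map hm.aemeasurable]
    exact (measurable_abs.stronglyMeasurable).aestronglyMeasurable
  rw [this, hlaw, integral_abs_gaussianReal h0]
  have hc : ((Real.toNNReal (σ ^ 2) : ℝ≥0) : ℝ) = σ ^ 2 :=
    Real.coe_toNNReal _ (by positivity)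
  rw [hc]
  rw [show 2 * σ ^ 2 / Real.pi = σ ^ 2 * (2 / Real.pi) by ring,
    Real.sqrt_mul (by positivity), Real.sqrt_sq hσ.le]

/-- SAQ's segment error model under the Gaussian assumption: if for each dimension
`i ∈ Seg` the data and query values `O_i, Q_i` are independent mean-zero Gaussians
with variance `σ_i²`, then
`Σ_{i ∈ Seg} E[|O_i·Q_i|]/2^{B+1} = (Σ_{i ∈ Seg} σ_i²)/(2^B·π)`. -/
theorem saq_segment_error_model {Ω : Type*} [MeasureSpace Ω]
    [IsProbabilityMeasure (ℙ : Measure Ω)] {ι : Type*} (Seg : Finset ι) (B : ℕ)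
    (O Q : ι → Ω → ℝ) (σ : ι → ℝ)
    (hσ : ∀ i ∈ Seg, 0 < σ i)
    (hOmeas : ∀ i ∈ Seg, Measurable (O i)) (hQmeas : ∀ i ∈ Seg, Measurable (Q i))
    (hOlaw : ∀ i ∈ Seg, Measure.map (O i) ℙ = gaussianReal 0 (Real.toNNReal (σ i ^ 2)))
    (hQlaw : ∀ i ∈ Seg, Measure.map (Q i) ℙ = gaussianReal 0 (Real.toNNReal (σ i ^ 2)))
    (hindep : ∀ i ∈ Seg, IndepFun (O i) (Q i) ℙ) :
    ∑ i ∈ Seg, (∫ ω, |O i ω * Q i ω| ∂ℙ) / 2 ^ (B + 1) =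
      (1 / (2 ^ B * Real.pi)) * ∑ i ∈ Seg, σ i ^ 2 := by
  have key : ∀ i ∈ Seg, (∫ ω, |O i ω * Q i ω| ∂ℙ) = 2 * σ i ^ 2 / Real.pi := by
    intro i hi
    have hind : IndepFun (fun ω => |O i ω|) (fun ω => |Q i ω|) ℙ :=
      (hindep i hi).comp measurable_abs measurable_abs
    have hmul : (∫ ω, |O i ω * Q i ω| ∂ℙ)
        = (∫ ω, |O i ω| ∂ℙ) * (∫ ω, |Q i ω| ∂ℙ) := by
      have := hind.integral_fun_mul_eq_mul_integral
        ((hOmeas i hi).abs.aestronglyMeasurable) ((hQmeas i hi).abs.aestronglyMeasurable)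
      simpa [abs_mul] using this
    rw [hmul, integral_abs_of_gaussian (hσ i hi) (hOmeas i hi) (hOlaw i hi),
      integral_abs_of_gaussian (hσ i hi) (hQmeas i hi) (hQlaw i hi)]
    have h2 : Real.sqrt (2 / Real.pi) * Real.sqrt (2 / Real.pi) = 2 / Real.pi :=
      Real.mul_self_sqrt (by positivity)
    rw [show σ i * Real.sqrt (2 / Real.pi) * (σ i * Real.sqrt (2 / Real.pi))
      = σ i ^ 2 * (Real.sqrt (2 / Real.pi) * Real.sqrt (2 / Real.pi)) by ring, h2]
    ring
  rw [Finset.sum_congr rfl (fun i hi => by rw [key i hi]), Finset.mul_sum]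
  refine Finset.sum_congr rfl (fun i _ => ?_)
  have hpi := Real.pi_pos
  have h2 : (2:ℝ) ^ (B+1) = 2 * 2 ^ B := by ring
  field_simp [h2]
  ring
end

section
/- Let E be a real inner product space and let o, q, ō ∈ E be unit vectors (‖o‖ = ‖q‖ = ‖ō‖ = 1) with ⟨ō, o⟩ > 0. Then |⟨ō, q⟩/⟨ō, o⟩ − ⟨o, q⟩| ≤ (√(1 − ⟨ō, o⟩²)/⟨ō, o⟩) · √(1 − ⟨o, q⟩²). In particular, the estimator error is at most √((1 − ⟨ō, o⟩²)/⟨ō, o⟩²), matching the error-bound factor appearing in RaBitQ's analysis. -/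
open RealInnerProductSpace

/-- Error bound for the RaBitQ-style estimator on unit vectors: if `‖o‖ = ‖q‖ = ‖ō‖ = 1`
and `⟪ō, o⟫ > 0`, then the estimator's error is bounded by
`(√(1 − ⟪ō, o⟫²)/⟪ō, o⟫)·√(1 − ⟪o, q⟫²)`, and in particular by
`√((1 − ⟪ō, o⟫²)/⟪ō, o⟫²)`. -/
theorem estimator_error_bound {E : Type*} [NormedAddCommGroup E]
    [InnerProductSpace ℝ E] (o q obar : E)
    (ho : ‖o‖ = 1) (hq : ‖q‖ = 1) (hobar : ‖obar‖ = 1)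
    (hpos : 0 < ⟪obar, o⟫) :
    |⟪obar, q⟫ / ⟪obar, o⟫ - ⟪o, q⟫| ≤
      (Real.sqrt (1 - ⟪obar, o⟫ ^ 2) / ⟪obar, o⟫) * Real.sqrt (1 - ⟪o, q⟫ ^ 2) ∧
    |⟪obar, q⟫ / ⟪obar, o⟫ - ⟪o, q⟫| ≤
      Real.sqrt ((1 - ⟪obar, o⟫ ^ 2) / ⟪obar, o⟫ ^ 2) := by
  set a : ℝ := ⟪obar, o⟫ with ha
  set b : ℝ := ⟪o, q⟫ with hb
  set e : E := obar - a • o with he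
  set f : E := q - b • o with hf
  have hoo : ⟪o, o⟫ = (1 : ℝ) := by
    rw [real_inner_self_eq_norm_sq, ho]; norm_num
  have hobo : ⟪o, obar⟫ = a := by rw [real_inner_comm]
  have hqo : ⟪q, o⟫ = b := by rw [real_inner_comm]
  have hef : ⟪e, f⟫ = ⟪obar, q⟫ - a * b := by
    simp only [he, hf, inner_sub_left, inner_sub_right, inner_smul_left,
      inner_smul_right, hoo, hobo, hqo, RCLike.conj_to_real]
    ring
  have hne : ‖e‖ ^ 2 = 1 - a ^ 2 := by
    rw [← real_inner_self_eq_norm_sq]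
    simp only [he, inner_sub_left, inner_sub_right, inner_smul_left,
      inner_smul_right, hoo, hobo, RCLike.conj_to_real]
    have : ⟪obar, obar⟫ = (1 : ℝ) := by
      rw [real_inner_self_eq_norm_sq, hobar]; norm_num
    rw [this]; ring
  have hnf : ‖f‖ ^ 2 = 1 - b ^ 2 := by
    rw [← real_inner_self_eq_norm_sq]
    simp only [hf, inner_sub_left, inner_sub_right, inner_smul_left,
      inner_smul_right, hoo, hqo, RCLike.conj_to_real]
    have hqq : ⟪q, q⟫ = (1 : ℝ) := by
      rw [real_inner_self_eq_norm_sq, hq]; norm_num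
    have hoq : ⟪o, q⟫ = b := rfl
    rw [hqq, hoq]; ring
  have hnev : ‖e‖ = Real.sqrt (1 - a ^ 2) := by
    rw [← hne, Real.sqrt_sq (norm_nonneg e)]
  have hnfv : ‖f‖ = Real.sqrt (1 - b ^ 2) := by
    rw [← hnf, Real.sqrt_sq (norm_nonneg f)]
  have hcs : |⟪e, f⟫| ≤ Real.sqrt (1 - a ^ 2) * Real.sqrt (1 - b ^ 2) := by
    rw [← hnev, ← hnfv]; exact abs_real_inner_le_norm e f
  have hkey : ⟪obar, q⟫ / a - b = ⟪e, f⟫ / a := by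
    field_simp [hef]
    exact hef.symm
  have hmain : |⟪obar, q⟫ / a - b| ≤
      Real.sqrt (1 - a ^ 2) / a * Real.sqrt (1 - b ^ 2) := by
    rw [hkey, abs_div, abs_of_pos hpos]
    rw [div_mul_eq_mul_div]
    exact div_le_div_of_nonneg_right hcs hpos.le |>.trans_eq rfl
  refine ⟨hmain, hmain.trans ?_⟩
  have h1 : Real.sqrt (1 - b ^ 2) ≤ 1 := by
    calc Real.sqrt (1 - b ^ 2) ≤ Real.sqrt 1 :=
          Real.sqrt_le_sqrt (by nlinarith [sq_nonneg b])
      _ = 1 := Real.sqrt_one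
  have hapos : (0:ℝ) ≤ 1 - a ^ 2 := by rw [← hne]; positivity
  have h2 : Real.sqrt ((1 - a ^ 2) / a ^ 2) = Real.sqrt (1 - a ^ 2) / a := by
    rw [Real.sqrt_div hapos, Real.sqrt_sq hpos.le]
  rw [h2]
  calc Real.sqrt (1 - a ^ 2) / a * Real.sqrt (1 - b ^ 2)
      ≤ Real.sqrt (1 - a ^ 2) / a * 1 :=
        mul_le_mul_of_nonneg_left h1 (by positivity)
    _ = Real.sqrt (1 - a ^ 2) / a := mul_one _
end
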